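/- arXiv:2405.03161 — 5 statements merged into one kernel-verified Lean document; each statement's English description precedes it below -/
import Mathlib

section
/- Let n be a natural number, let g : ℂ → ℂ be an entire (everywhere complex-differentiable) function, and let λ_0, …, λ_n be real numbers. Then for every z ∈ ℂ, the Wronskian at z of the n+1 functions w ↦ exp(λ_j · g(w)) (j = 0, …, n) equals (∏_{0 ≤ i < j ≤ n} (λ_j − λ_i)) · (g′(z))^{n(n+1)/2} · exp((λ_0 + ⋯ + λ_n) · g(z)). -/
open Complex Finset Matrix
open scoped ContDiff

/-!
Write `w ↦ exp (λ_j g w)` as `F_j ∘ g` with `F_j u = exp (λ_j u)`. By Faà di Bruno's formula,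
`(F ∘ g)^{(i)} = ∑_{k ≤ i} B_{i,k} · F^{(k)} ∘ g` with coefficients `B_{i,k}` depending only on `g`,
vanishing for `k > i` and with `B_{i,i} = (g')^i`. So the Wronskian matrix of the `F_j ∘ g` at `z`
is a lower triangular matrix with determinant `g'(z)^{n(n+1)/2}` times the Wronskian matrix of the
`F_j` at `g z`; the latter is the transposed Vandermonde matrix of the `λ_j` times the diagonal
matrix of the `exp (λ_j g z)`.
-/

section FaaDiBruno

variable {𝕜 : Type*} [NontriviallyNormedField 𝕜] {g : 𝕜 → 𝕜}

/-- The partial Bell polynomial `B_{i,k}(g', g'', …)`. -/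
noncomputable def partialBell (g : 𝕜 → 𝕜) : ℕ → ℕ → 𝕜 → 𝕜
  | 0, 0 => 1
  | 0, _ + 1 => 0
  | i + 1, 0 => deriv (partialBell g i 0)
  | i + 1, k + 1 => deriv (partialBell g i (k + 1)) + partialBell g i k * deriv g

theorem contDiff_partialBell (hg : ContDiff 𝕜 ∞ g) :
    ∀ i k, ContDiff 𝕜 ∞ (partialBell g i k)
  | 0, 0 => contDiff_const
  | 0, _ + 1 => contDiff_const
  | i + 1, 0 => (contDiff_partialBell hg i 0).iterate_deriv 1
  | i + 1, k + 1 => ((contDiff_partialBell hg i (k + 1)).iterate_deriv 1).add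
      ((contDiff_partialBell hg i k).mul (hg.iterate_deriv 1))

theorem partialBell_eq_zero_of_lt : ∀ {i k : ℕ}, i < k → partialBell g i k = 0
  | 0, _ + 1, _ => rfl
  | i + 1, k + 1, h => by
    rw [partialBell, partialBell_eq_zero_of_lt (by omega), partialBell_eq_zero_of_lt (by omega)]
    simp

theorem partialBell_self : ∀ i, partialBell g i i = deriv g ^ i
  | 0 => (pow_zero _).symm
  | i + 1 => by
    rw [partialBell, partialBell_eq_zero_of_lt (by omega), partialBell_self i]
    simp [pow_succ]

theorem iteratedDeriv_comp_eq_sum_partialBell {F : 𝕜 → 𝕜} (hF : ContDiff 𝕜 ∞ F)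
    (hg : ContDiff 𝕜 ∞ g) (i : ℕ) (w : 𝕜) :
    iteratedDeriv i (F ∘ g) w =
      ∑ k ∈ range (i + 1), partialBell g i k w * iteratedDeriv k F (g w) := by
  induction i generalizing w with
  | zero => simp [partialBell]
  | succ i ih =>
    have hterm : ∀ k, HasDerivAt (fun x => partialBell g i k x * iteratedDeriv k F (g x))
        (deriv (partialBell g i k) w * iteratedDeriv k F (g w) +
          partialBell g i k w * deriv g w * iteratedDeriv (k + 1) F (g w)) w := fun k => by
      have hB := (contDiff_partialBell hg i k).differentiable (by simp) w
      have hFk := hF.differentiable_iteratedDeriv k (mod_cast ENat.natCast_lt_top k) (g w)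
      have hFkg := hFk.hasDerivAt.comp w (hg.differentiable (by simp) w).hasDerivAt
      rw [iteratedDeriv_succ]
      exact (hB.hasDerivAt.fun_mul hFkg).congr_deriv (by rw [Function.comp_apply]; ring)
    have hshift : ∑ k ∈ range (i + 1), deriv (partialBell g i k) w * iteratedDeriv k F (g w) =
        ∑ k ∈ range (i + 1), deriv (partialBell g i (k + 1)) w * iteratedDeriv (k + 1) F (g w) +
          deriv (partialBell g i 0) w * iteratedDeriv 0 F (g w) := by
      rw [← sum_range_succ' (fun k => deriv (partialBell g i k) w * iteratedDeriv k F (g w)),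
        sum_range_succ _ (i + 1), partialBell_eq_zero_of_lt (lt_add_one i)]
      simp
    rw [iteratedDeriv_succ, funext ih, (HasDerivAt.fun_sum fun k _ => hterm k).deriv,
      sum_add_distrib, hshift, sum_range_succ' _ (i + 1)]
    simp only [partialBell, Pi.add_apply, Pi.mul_apply, add_mul, sum_add_distrib]
    ring

end FaaDiBruno

section Wronskian

variable {𝕜 : Type*} [NontriviallyNormedField 𝕜] {m : ℕ}

noncomputable def wronskianMatrix (f : Fin m → 𝕜 → 𝕜) (z : 𝕜) : Matrix (Fin m) (Fin m) 𝕜 :=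
  of fun i j => iteratedDeriv i (f j) z

noncomputable def partialBellMatrix (g : 𝕜 → 𝕜) (m : ℕ) (z : 𝕜) : Matrix (Fin m) (Fin m) 𝕜 :=
  of fun i k => partialBell g i k z

theorem det_partialBellMatrix (g : 𝕜 → 𝕜) (m : ℕ) (z : 𝕜) :
    det (partialBellMatrix g m z) = deriv g z ^ (m * (m - 1) / 2) := by
  have hlower : (partialBellMatrix g m z).IsLowerTriangular := fun i k hik => by
    rw [partialBellMatrix, of_apply, partialBell_eq_zero_of_lt (i := i) (k := k) hik,
      Pi.zero_apply]
  rw [det_of_isLowerTriangular _ hlower, ← sum_range_id, ← Fin.sum_univ_eq_sum_range,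
    ← prod_pow_eq_pow_sum]
  simp [partialBellMatrix, partialBell_self]

theorem wronskianMatrix_comp {F : Fin m → 𝕜 → 𝕜} {g : 𝕜 → 𝕜} (hF : ∀ j, ContDiff 𝕜 ∞ (F j))
    (hg : ContDiff 𝕜 ∞ g) (z : 𝕜) :
    wronskianMatrix (fun j => F j ∘ g) z = partialBellMatrix g m z * wronskianMatrix F (g z) := by
  ext i j
  simp only [wronskianMatrix, partialBellMatrix, mul_apply, of_apply,
    iteratedDeriv_comp_eq_sum_partialBell (hF j) hg]
  rw [Fin.sum_univ_eq_sum_range (fun k => partialBell g i k z * iteratedDeriv k (F j) (g z))]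
  refine sum_subset (range_subset_range.mpr i.isLt) fun k _ hk => ?_
  rw [partialBell_eq_zero_of_lt (by simpa using hk), Pi.zero_apply, zero_mul]

theorem det_wronskianMatrix_comp {F : Fin m → 𝕜 → 𝕜} {g : 𝕜 → 𝕜}
    (hF : ∀ j, ContDiff 𝕜 ∞ (F j)) (hg : ContDiff 𝕜 ∞ g) (z : 𝕜) :
    det (wronskianMatrix (fun j => F j ∘ g) z) =
      deriv g z ^ (m * (m - 1) / 2) * det (wronskianMatrix F (g z)) := by
  rw [wronskianMatrix_comp hF hg, det_mul, det_partialBellMatrix]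

end Wronskian

theorem wronskianMatrix_cexp_const_mul {m : ℕ} (c : Fin m → ℂ) (u : ℂ) :
    wronskianMatrix (fun j u => cexp (c j * u)) u =
      (vandermonde c)ᵀ * diagonal fun j => cexp (c j * u) := by
  ext i j
  simp [wronskianMatrix, mul_diagonal]

theorem det_wronskianMatrix_cexp_const_mul {m : ℕ} (c : Fin m → ℂ) (u : ℂ) :
    det (wronskianMatrix (fun j u => cexp (c j * u)) u) =
      (∏ i : Fin m, ∏ j ∈ Ioi i, (c j - c i)) * cexp ((∑ j, c j) * u) := by
  rw [wronskianMatrix_cexp_const_mul, det_mul, det_transpose, det_vandermonde, det_diagonal,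
    sum_mul, exp_sum]

/-- The Wronskian of the functions `w ↦ exp(λ_j g(w))`, for `g` entire and real `λ_j`,
equals `(∏_{i<j} (λ_j − λ_i)) · g'(z)^{n(n+1)/2} · exp((Σ λ_j) g(z))`. -/
theorem wronskian_exp_lambda_g (n : ℕ) (g : ℂ → ℂ) (hg : Differentiable ℂ g)
    (l : Fin (n + 1) → ℝ) (z : ℂ) :
    Matrix.det (Matrix.of fun i j : Fin (n + 1) =>
        iteratedDeriv (i : ℕ) (fun w => Complex.exp ((l j : ℂ) * g w)) z) =
    (∏ i : Fin (n + 1), ∏ j ∈ Finset.Ioi i, ((l j : ℂ) - (l i : ℂ))) *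
      deriv g z ^ (n * (n + 1) / 2) *
      Complex.exp ((∑ j : Fin (n + 1), (l j : ℂ)) * g z) := by
  have hexp : ∀ j, ContDiff ℂ ∞ fun u => cexp ((l j : ℂ) * u) := fun j => by fun_prop
  have h := det_wronskianMatrix_comp hexp hg.contDiff z
  rw [det_wronskianMatrix_cexp_const_mul, Nat.add_sub_cancel, mul_comm (n + 1)] at h
  exact h.trans (by ring)
end

section
/- Let n be a natural number, let g : ℂ → ℂ be an entire nonconstant function, and let λ_0, …, λ_n be pairwise distinct real numbers. Then the n+1 functions ℂ → ℂ given by z ↦ exp(λ_j · g(z)) (j = 0, …, n) are linearly independent over ℂ. -/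
/-!
If `∑ cⱼ exp(λⱼ g) = 0`, then the entire function `F w = ∑ cⱼ exp(λⱼ w)` vanishes on the image
of `g`, which is open by the open mapping theorem; by the identity theorem `F = 0`. The
exponentials `w ↦ exp(λ w)` are distinct characters of the additive group `ℂ`, hence linearly
independent (Dedekind–Artin), so all `cⱼ` vanish.
-/

open Complex

section Composition

variable {E : Type*} [NormedAddCommGroup E] [NormedSpace ℂ E] [CompleteSpace E] {g : ℂ → ℂ}

theorem Differentiable.eq_zero_of_comp_eq_zero {F : ℂ → E} (hF : Differentiable ℂ F)
    (hg : Differentiable ℂ g) (hgc : ∃ z w, g z ≠ g w) (h : F ∘ g = 0) : F = 0 := by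
  have hg_open : IsOpen (Set.range g) := by
    rcases (analyticOnNhd_univ_iff_differentiable.mpr hg).is_constant_or_isOpen
      isPreconnected_univ with ⟨c, hc⟩ | hopen
    · obtain ⟨z, w, hzw⟩ := hgc
      exact absurd ((hc z trivial).trans (hc w trivial).symm) hzw
    · simpa using hopen Set.univ le_rfl isOpen_univ
  have hF_near : F =ᶠ[nhds (g 0)] 0 := by
    filter_upwards [hg_open.mem_nhds (Set.mem_range_self 0)] with w ⟨z, hz⟩
    rw [← hz]
    exact congrFun h z
  have hF_an : AnalyticOnNhd ℂ F Set.univ := analyticOnNhd_univ_iff_differentiable.mpr hF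
  funext w
  exact hF_an.eqOn_zero_of_preconnected_of_eventuallyEq_zero isPreconnected_univ
    (Set.mem_univ _) hF_near (Set.mem_univ w)

theorem LinearIndependent.comp_of_differentiable {ι : Type*} {v : ι → ℂ → E}
    (hv : LinearIndependent ℂ v) (hvd : ∀ i, Differentiable ℂ (v i))
    (hg : Differentiable ℂ g) (hgc : ∃ z w, g z ≠ g w) :
    LinearIndependent ℂ (fun i => v i ∘ g) := by
  refine hv.map (f := LinearMap.funLeft ℂ E g) ?_
  rw [Submodule.disjoint_def]
  intro F hF_span hF_ker
  have hF : Differentiable ℂ F := by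
    clear hF_ker
    induction hF_span using Submodule.span_induction with
    | mem _ hx => obtain ⟨i, rfl⟩ := hx; exact hvd i
    | zero => exact differentiable_const 0
    | add _ _ _ _ hx hy => exact hx.add hy
    | smul a _ _ hx => exact hx.const_smul a
  exact hF.eq_zero_of_comp_eq_zero hg hgc hF_ker

end Composition

noncomputable def Complex.expMulChar (c : ℂ) : Multiplicative ℂ →* ℂ where
  toFun w := exp (c * w.toAdd)
  map_one' := by simp
  map_mul' x y := by simp [mul_add, exp_add]

theorem Complex.expMulChar_injective : Function.Injective expMulChar := by
  intro a b hab
  have hderiv (c : ℂ) : HasDerivAt (fun w => exp (c * w)) c 0 := by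
    simpa using ((hasDerivAt_id (0 : ℂ)).const_mul c).cexp
  have hfun : (fun w => exp (a * w)) = fun w => exp (b * w) :=
    funext fun w => DFunLike.congr_fun hab (Multiplicative.ofAdd w)
  exact (hderiv a).unique (hfun ▸ hderiv b)

theorem Complex.linearIndependent_exp_mul {ι : Type*} {l : ι → ℂ} (hl : Function.Injective l) :
    LinearIndependent ℂ (fun j => fun w : ℂ => exp (l j * w)) :=
  (linearIndependent_monoidHom (Multiplicative ℂ) ℂ).comp (fun j => expMulChar (l j))
    (expMulChar_injective.comp hl)

/-- For `g` entire and nonconstant and pairwise distinct real `λ_0, …, λ_n`,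
the functions `z ↦ exp(λ_j g(z))` are linearly independent over `ℂ`. -/
theorem linearIndependent_exp_lambda_g (n : ℕ) (g : ℂ → ℂ) (hg : Differentiable ℂ g)
    (hgc : ∃ z w : ℂ, g z ≠ g w) (l : Fin (n + 1) → ℝ) (hl : Function.Injective l) :
    LinearIndependent ℂ
      (fun j : Fin (n + 1) => fun z : ℂ => Complex.exp ((l j : ℂ) * g z)) :=
  (linearIndependent_exp_mul (ofReal_injective.comp hl)).comp_of_differentiable
    (fun _ => (differentiable_id.const_mul _).cexp) hg hgc
end

section
/- Let n be a natural number, let a_0, …, a_n be real numbers, and let x > 0. Then the Wronskian at x (with derivatives taken within the interval (0, ∞)) of the n+1 functions (0, ∞) → ℝ given by t ↦ t^{a_j} (j = 0, …, n, real powers) equals (∏_{0 ≤ i < j ≤ n} (a_j − a_i)) · x^{a_0 + ⋯ + a_n − n(n+1)/2}. -/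
/-!
The `i`-th derivative of `t ↦ t ^ a` on `(0, ∞)` is `(a)ᵢ · t ^ (a - i)`, where `(a)ᵢ` is the
falling factorial `descPochhammer i` evaluated at `a`. Pulling `x ^ (-i)` out of row `i` and
`x ^ a_j` out of column `j` leaves the matrix `((a_j)ᵢ)ᵢⱼ`; since the falling factorials are
monic of degree `i`, row operations reduce it to the Vandermonde matrix of the `a_j`.
-/

open Polynomial Finset Real

theorem iteratedDerivWithin_rpow_const_Ioi (r : ℝ) (k : ℕ) {x : ℝ} (hx : 0 < x) :
    iteratedDerivWithin k (fun t : ℝ => t ^ r) (Set.Ioi 0) x =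
      (descPochhammer ℝ k).eval r * x ^ (r - k) := by
  rw [iteratedDerivWithin_of_isOpen_eq_iterate isOpen_Ioi hx, iter_deriv_rpow_const]

theorem Fin.sum_univ_natCast_val {K : Type*} [Field K] [CharZero K] (n : ℕ) :
    ∑ i : Fin (n + 1), (i : K) = n * (n + 1) / 2 := by
  have h := Finset.sum_range_id_mul_two (n + 1)
  rw [Nat.add_sub_cancel] at h
  rw [Fin.sum_univ_eq_sum_range (fun i => (i : K)), ← Nat.cast_sum, eq_div_iff two_ne_zero]
  exact_mod_cast h.trans (mul_comm _ _)

namespace Matrix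

variable {R : Type*} [CommRing R]

theorem det_mul_row_mul_column {ι : Type*} [Fintype ι] [DecidableEq ι] (u v : ι → R)
    (A : ι → ι → R) :
    det (of fun i j => u i * v j * A i j) = (∏ i, u i) * (∏ j, v j) * det (of A) := by
  simp_rw [mul_assoc, ← det_mul_row v (of A), ← det_mul_column]
  rfl

theorem det_eval_descPochhammer [IsDomain R] {n : ℕ} (v : Fin n → R) :
    det (of fun i j : Fin n => (descPochhammer R i).eval (v j)) =
      ∏ i : Fin n, ∏ j ∈ Ioi i, (v j - v i) := by
  rw [← det_transpose, ← det_vandermonde,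
    det_eval_matrixOfPolynomials_eq_det_vandermonde v _ (fun i => descPochhammer_natDegree R i)
      (fun i => monic_descPochhammer R i)]
  rfl

end Matrix

/-- The Wronskian at `x > 0` (derivatives within `(0,∞)`) of the real power functions
`t ↦ t^{a_j}` equals `(∏_{i<j} (a_j − a_i)) · x^{a_0+⋯+a_n − n(n+1)/2}`. -/
theorem wronskian_rpow (n : ℕ) (a : Fin (n + 1) → ℝ) (x : ℝ) (hx : 0 < x) :
    Matrix.det (Matrix.of fun i j : Fin (n + 1) =>
        iteratedDerivWithin (i : ℕ) (fun t : ℝ => t ^ a j) (Set.Ioi (0 : ℝ)) x) =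
    (∏ i : Fin (n + 1), ∏ j ∈ Finset.Ioi i, (a j - a i)) *
      x ^ ((∑ j, a j) - (n * (n + 1) : ℝ) / 2) := by
  have hentry (i j : Fin (n + 1)) :
      iteratedDerivWithin i (fun t : ℝ => t ^ a j) (Set.Ioi 0) x =
        x ^ (-(i : ℝ)) * x ^ a j * (descPochhammer ℝ i).eval (a j) := by
    rw [iteratedDerivWithin_rpow_const_Ioi _ _ hx, sub_eq_neg_add, rpow_add hx]
    ring
  simp_rw [hentry, Matrix.det_mul_row_mul_column, Matrix.det_eval_descPochhammer,
    ← rpow_sum_of_pos hx, ← rpow_add hx, sum_neg_distrib, Fin.sum_univ_natCast_val]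
  rw [mul_comm, neg_add_eq_sub]
end

section
/- Let n be a natural number, let β_0 < β_1 < ⋯ < β_n be real numbers, and let φ_0, …, φ_n be polynomials with complex coefficients such that the n+1 functions (0, ∞) → ℂ given by x ↦ x^{β_j} · φ_j(x) are linearly independent over ℂ. Then there exist an invertible (n+1)×(n+1) complex matrix T and nonzero polynomials ψ_0, …, ψ_n with complex coefficients such that: (i) for every i and every x > 0, x^{β_i} · ψ_i(x) = Σ_{j=0}^{n} T_{ij} · x^{β_j} · φ_j(x); and (ii) the n+1 real numbers β_0 + deg ψ_0, β_1 + deg ψ_1, …, β_n + deg ψ_n are pairwise distinct. -/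
/-!
Induct on the number of functions, peeling off the smallest exponent `β₀`. The remaining
functions have already been replaced by `x ^ β_j * ψ_j x` with distinct quasi-degrees. Those
with `β_j = β₀ + m`, `m ∈ ℕ`, equal `x ^ β₀` times the polynomial `X ^ m * ψ_j`, whose degree is
exactly their quasi-degree minus `β₀`. Cancelling leading terms of `φ₀` against these polynomials
moves its degree off all of their degrees; by linear independence, `φ₀` never lies in their span,
so the process cannot reach zero. The new family is still linearly independent and lies in the
span of the old one, which makes the transition matrix invertible.
-/

open Polynomial Submodule Set

theorem Polynomial.exists_degree_sub_C_mul_lt {K : Type*} [Field K] {p q : K[X]} (hp : p ≠ 0)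
    (hq : q ≠ 0) (hpq : p.natDegree = q.natDegree) :
    ∃ a : K, (p - C a * q).degree < p.degree := by
  refine ⟨p.leadingCoeff / q.leadingCoeff, degree_sub_lt_left ?_ hp ?_⟩
  · rw [degree_C_mul (div_ne_zero (leadingCoeff_ne_zero.2 hp) (leadingCoeff_ne_zero.2 hq)),
      degree_eq_natDegree hp, degree_eq_natDegree hq, hpq]
  · rw [leadingCoeff_mul, leadingCoeff_C, div_mul_cancel₀ _ (leadingCoeff_ne_zero.2 hq)]

theorem Polynomial.exists_natDegree_add_notMem_of_notMem_span {K : Type*} [Field K]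
    {G : Set K[X]} (hG : (0 : K[X]) ∉ G) {p : K[X]} (hp : p ∉ span K G) :
    ∃ s ∈ span K G, (p + s).natDegree ∉ natDegree '' G := by
  induction hN : p.natDegree using Nat.strong_induction_on generalizing p with
  | _ N ih =>
  by_cases hNG : N ∈ natDegree '' G
  · obtain ⟨g, hgG, hgN⟩ := hNG
    have hp0 : p ≠ 0 := fun h => hp (h ▸ zero_mem _)
    have hg0 : g ≠ 0 := fun h => hG (h ▸ hgG)
    obtain ⟨a, ha⟩ := exists_degree_sub_C_mul_lt hp0 hg0 (hN.trans hgN.symm)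
    have hCg : C a * g ∈ span K G := by
      rw [C_mul']; exact smul_mem _ _ (subset_span hgG)
    have hq : p - C a * g ∉ span K G := fun h => hp (by simpa using add_mem h hCg)
    have hq0 : p - C a * g ≠ 0 := fun h => hq (h ▸ zero_mem _)
    obtain ⟨s, hs, hdeg⟩ := ih _ (hN ▸ natDegree_lt_natDegree hq0 ha) hq rfl
    exact ⟨s - C a * g, sub_mem hs hCg, by rwa [← add_sub_assoc, ← sub_add_eq_add_sub]⟩
  · exact ⟨0, zero_mem _, by rwa [add_zero, hN]⟩

theorem Matrix.isUnit_of_linearIndependent_eq_sum_smul {K M ι : Type*} [Field K]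
    [AddCommGroup M] [Module K M] [Fintype ι] [DecidableEq ι] {h f : ι → M}
    (hh : LinearIndependent K h) (T : Matrix ι ι K) (hT : ∀ i, h i = ∑ j, T i j • f j) :
    IsUnit T := by
  rw [isUnit_iff_isUnit_det, isUnit_iff_ne_zero]
  intro hdet
  obtain ⟨v, hv0, hvT⟩ := exists_vecMul_eq_zero_iff.2 hdet
  refine hv0 (funext <| Fintype.linearIndependent_iff.1 hh v ?_)
  calc ∑ i, v i • h i = ∑ j, vecMul v T j • f j := by
        simp only [hT, Finset.smul_sum, smul_smul, vecMul, dotProduct, Finset.sum_smul]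
        exact Finset.sum_comm
    _ = 0 := by simp [hvT]

noncomputable def quasiPoly (β : ℝ) : ℂ[X] →ₗ[ℂ] (Ioi (0 : ℝ) → ℂ) where
  toFun p x := ((x : ℝ) ^ β : ℝ) * p.eval ((x : ℝ) : ℂ)
  map_add' p q := by ext x; simp [mul_add]
  map_smul' c p := by ext x; simp [mul_left_comm]

theorem quasiPoly_apply (β : ℝ) (p : ℂ[X]) (x : Ioi (0 : ℝ)) :
    quasiPoly β p x = ((x : ℝ) ^ β : ℝ) * p.eval ((x : ℝ) : ℂ) := rfl

theorem quasiPoly_add_natCast (β : ℝ) (m : ℕ) (p : ℂ[X]) :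
    quasiPoly (β + m) p = quasiPoly β (X ^ m * p) := by
  ext x
  simp [quasiPoly_apply, Real.rpow_add x.2, mul_assoc]

theorem exists_quasiPoly_sub_mem_span_quasidegree_ne {ι : Type*} {β₀ : ℝ} {β : ι → ℝ}
    {ψ : ι → ℂ[X]} (hβ : ∀ j, β₀ < β j) (hψ : ∀ j, ψ j ≠ 0)
    {φ₀ : ℂ[X]}
    (hφ₀ : quasiPoly β₀ φ₀ ∉ span ℂ (range fun j => quasiPoly (β j) (ψ j))) :
    ∃ ψ₀ : ℂ[X],
      quasiPoly β₀ ψ₀ - quasiPoly β₀ φ₀ ∈ span ℂ (range fun j => quasiPoly (β j) (ψ j)) ∧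
      ∀ j, β₀ + ψ₀.natDegree ≠ β j + (ψ j).natDegree := by
  set G : Set ℂ[X] := {q | ∃ j, ∃ m : ℕ, β j = β₀ + m ∧ q = X ^ m * ψ j}
  have hG0 : (0 : ℂ[X]) ∉ G := by
    rintro ⟨j, m, -, h⟩
    exact mul_ne_zero (pow_ne_zero m X_ne_zero) (hψ j) h.symm
  have hGspan :
      span ℂ G ≤ (span ℂ (range fun j => quasiPoly (β j) (ψ j))).comap (quasiPoly β₀) := by
    rw [span_le]
    rintro _ ⟨j, m, hm, rfl⟩
    rw [SetLike.mem_coe, mem_comap, ← quasiPoly_add_natCast, ← hm]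
    exact subset_span ⟨j, rfl⟩
  obtain ⟨s, hs, hdeg⟩ :=
    exists_natDegree_add_notMem_of_notMem_span hG0 fun h => hφ₀ (hGspan h)
  refine ⟨φ₀ + s, by simpa using hGspan hs, fun j hj => hdeg ?_⟩
  have hlt : (ψ j).natDegree < (φ₀ + s).natDegree := by
    exact_mod_cast (by linarith [hβ j] : ((ψ j).natDegree : ℝ) < (φ₀ + s).natDegree)
  refine ⟨X ^ ((φ₀ + s).natDegree - (ψ j).natDegree) * ψ j, ⟨j, _, ?_, rfl⟩, ?_⟩
  · push_cast [Nat.cast_sub hlt.le]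
    linarith
  · rw [natDegree_mul (pow_ne_zero _ X_ne_zero) (hψ j), natDegree_X_pow]
    omega

theorem exists_quasiPoly_linearIndependent_quasidegree_injective :
    ∀ (n : ℕ) (β : Fin n → ℝ), StrictMono β → ∀ φ : Fin n → ℂ[X],
      LinearIndependent ℂ (fun j => quasiPoly (β j) (φ j)) →
      ∃ ψ : Fin n → ℂ[X], LinearIndependent ℂ (fun i => quasiPoly (β i) (ψ i)) ∧
        span ℂ (range fun i => quasiPoly (β i) (ψ i)) ≤
          span ℂ (range fun j => quasiPoly (β j) (φ j)) ∧
        Function.Injective fun i => β i + ((ψ i).natDegree : ℝ)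
  | 0, _, _, _, _ =>
    ⟨Fin.elim0, linearIndependent_empty_type, by simp, Function.injective_of_subsingleton _⟩
  | n + 1, β, hβ, φ, hli => by
    rw [linearIndependent_finSucc] at hli
    obtain ⟨ψ', hli', hspan', hinj'⟩ :=
      exists_quasiPoly_linearIndependent_quasidegree_injective n (Fin.tail β)
        (hβ.comp Fin.strictMono_succ) (Fin.tail φ) hli.1
    have hspan'' : span ℂ (range fun j => quasiPoly (β j.succ) (ψ' j)) ≤
        span ℂ (range fun j => quasiPoly (β j) (φ j)) :=
      hspan'.trans <| span_mono <|
        range_comp_subset_range Fin.succ fun j => quasiPoly (β j) (φ j)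
    have hf₀ : quasiPoly (β 0) (φ 0) ∉ span ℂ (range fun j => quasiPoly (β j.succ) (ψ' j)) :=
      fun h => hli.2 (hspan' h)
    obtain ⟨ψ₀, hψ₀, hne⟩ := exists_quasiPoly_sub_mem_span_quasidegree_ne
      (fun j => hβ (Fin.succ_pos j))
      (fun j h => hli'.ne_zero j (by simp [Fin.tail, h])) hf₀
    refine ⟨Fin.cons ψ₀ ψ', ?_, ?_, ?_⟩
    · rw [linearIndependent_finSucc]
      simp only [Fin.tail_def, Fin.cons_succ, Fin.cons_zero]
      exact ⟨hli', fun h => hf₀ (by simpa using sub_mem h hψ₀)⟩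
    · rw [span_le, range_subset_iff]
      refine Fin.cases ?_ fun j => hspan'' (subset_span ⟨j, rfl⟩)
      have hf₀_mem : quasiPoly (β 0) (φ 0) ∈ span ℂ (range fun j => quasiPoly (β j) (φ j)) :=
        subset_span ⟨0, rfl⟩
      simpa using add_mem hf₀_mem (hspan'' hψ₀)
    · rw [← Fin.cons_self_tail (fun i => β i + _), Fin.cons_injective_iff]
      exact ⟨fun ⟨j, hj⟩ => hne j hj.symm, hinj'⟩

/-- Distinct quasi-degrees after a linear change: given `β_0 < ⋯ < β_n` and polynomials
`φ_j` with `x ↦ x^{β_j} φ_j(x)` linearly independent on `(0,∞)`, there is an invertible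
matrix `T` and nonzero polynomials `ψ_i` with `x^{β_i} ψ_i(x) = Σ_j T_{ij} x^{β_j} φ_j(x)`
and pairwise distinct quasi-degrees `β_i + deg ψ_i`. -/
theorem exists_unitary_change_distinct_quasidegrees (n : ℕ) (β : Fin (n + 1) → ℝ)
    (hβ : StrictMono β) (φ : Fin (n + 1) → Polynomial ℂ)
    (hli : LinearIndependent ℂ (fun j : Fin (n + 1) => fun x : Set.Ioi (0 : ℝ) =>
      ((((x : ℝ) ^ β j : ℝ)) : ℂ) * (φ j).eval ((x : ℝ) : ℂ))) :
    ∃ (T : Matrix (Fin (n + 1)) (Fin (n + 1)) ℂ) (ψ : Fin (n + 1) → Polynomial ℂ),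
      IsUnit T ∧ (∀ i, ψ i ≠ 0) ∧
      (∀ i : Fin (n + 1), ∀ x : ℝ, 0 < x →
        ((x ^ β i : ℝ) : ℂ) * (ψ i).eval (x : ℂ) =
          ∑ j, T i j * (((x ^ β j : ℝ) : ℂ) * (φ j).eval (x : ℂ))) ∧
      Function.Injective (fun i => β i + ((ψ i).natDegree : ℝ)) := by
  obtain ⟨ψ, hψli, hψspan, hinj⟩ :=
    exists_quasiPoly_linearIndependent_quasidegree_injective (n + 1) β hβ φ hli
  choose T hT using fun i =>
    (mem_span_range_iff_exists_fun ℂ).1 (hψspan (subset_span ⟨i, rfl⟩))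
  refine ⟨Matrix.of T, ψ,
    Matrix.isUnit_of_linearIndependent_eq_sum_smul hψli _ fun i => (hT i).symm,
    fun i hi => hψli.ne_zero i (by simp [hi]), fun i x hx => ?_, hinj⟩
  simpa [quasiPoly_apply] using congrFun (hT i).symm ⟨x, hx⟩
end

section
/- Let n be a natural number, let β_0, …, β_n be real numbers, and let φ_0, …, φ_n be nonzero polynomials with complex coefficients such that the n+1 real numbers μ_j := β_j + deg φ_j (j = 0, …, n) are pairwise distinct. Let W(x) denote the Wronskian at x (with derivatives taken within (0, ∞)) of the n+1 functions (0, ∞) → ℂ given by t ↦ t^{β_j} · φ_j(t). Then, as x → ∞, the ratio W(x) / x^{μ_0 + ⋯ + μ_n − n(n+1)/2} tends to (∏_{0 ≤ i < j ≤ n} (μ_j − μ_i)) · ∏_{j=0}^{n} lc(φ_j), where lc denotes the leading coefficient. -/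
/-! The `i`-th derivative of `t ^ β * φ t` is `t ^ (β - i) * Q_i t`, where `Q_i` has degree at most
`deg φ` and its coefficient of `t ^ deg φ` is the falling factorial `μ (μ - 1) ⋯ (μ - i + 1)` times
`lc φ`, with `μ = β + deg φ`. Pulling `t ^ (-i)` out of row `i` and `t ^ μ_j` out of column `j` of
the Wronskian matrix leaves the entries `Q_ij t / t ^ deg φ_j`, which converge to those falling
factorials times `lc φ_j`. That limit matrix is a Vandermonde matrix in the `μ_j`, up to
unitriangular row operations and column scaling. -/

open Polynomial Filter Set

noncomputable def rpowDerivPoly (β : ℝ) (φ : ℂ[X]) : ℕ → ℂ[X]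
  | 0 => φ
  | i + 1 => C ((β - i : ℝ) : ℂ) * rpowDerivPoly β φ i + X * derivative (rpowDerivPoly β φ i)

theorem coeff_rpowDerivPoly (β : ℝ) (φ : ℂ[X]) (i d : ℕ) :
    (rpowDerivPoly β φ i).coeff d = (descPochhammer ℂ i).eval ((β + d : ℝ) : ℂ) * φ.coeff d := by
  induction i with
  | zero => simp [rpowDerivPoly]
  | succ i ih =>
    have hX : (X * derivative (rpowDerivPoly β φ i)).coeff d
        = d * (rpowDerivPoly β φ i).coeff d := by
      cases d with
      | zero => simp
      | succ m => rw [coeff_X_mul, coeff_derivative]; push_cast; ring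
    rw [rpowDerivPoly, coeff_add, coeff_C_mul, hX, ih, descPochhammer_succ_eval]
    push_cast
    ring

theorem natDegree_rpowDerivPoly_le (β : ℝ) (φ : ℂ[X]) (i : ℕ) :
    (rpowDerivPoly β φ i).natDegree ≤ φ.natDegree :=
  natDegree_le_iff_coeff_eq_zero.2 fun d hd => by
    rw [coeff_rpowDerivPoly, coeff_eq_zero_of_natDegree_lt hd, mul_zero]

theorem iteratedDerivWithin_rpow_mul_eval (β : ℝ) (φ : ℂ[X]) (i : ℕ) {x : ℝ} (hx : 0 < x) :
    iteratedDerivWithin i (fun t : ℝ => ((t ^ β : ℝ) : ℂ) * φ.eval (t : ℂ)) (Ioi 0) x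
      = ((x ^ (β - i) : ℝ) : ℂ) * (rpowDerivPoly β φ i).eval (x : ℂ) := by
  induction i generalizing x with
  | zero => simp [rpowDerivPoly]
  | succ i ih =>
    have hpow : HasDerivAt (fun t : ℝ => ((t ^ (β - i) : ℝ) : ℂ))
        (((β - i) * x ^ (β - i - 1) : ℝ) : ℂ) x :=
      (Real.hasDerivAt_rpow_const (Or.inl hx.ne')).ofReal_comp
    have hpoly := ((rpowDerivPoly β φ i).hasDerivAt (x : ℂ)).comp_ofReal
    have hx_pow : x ^ (β - i) = x ^ (β - i - 1) * x := by
      rw [← Real.rpow_add_one hx.ne', sub_add_cancel]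
    rw [iteratedDerivWithin_succ,
      derivWithin_congr (fun y (hy : y ∈ Ioi (0 : ℝ)) => ih (x := y) hy) (ih hx),
      derivWithin_of_isOpen isOpen_Ioi hx, (hpow.fun_mul hpoly).deriv, rpowDerivPoly,
      Nat.cast_succ, ← sub_sub]
    simp only [eval_add, eval_mul, eval_C, eval_X, hx_pow]
    push_cast
    ring

theorem Polynomial.tendsto_eval_div_pow_atTop {Q : ℂ[X]} {d : ℕ} (hd : Q.natDegree ≤ d) :
    Tendsto (fun x : ℝ => Q.eval (x : ℂ) / (x : ℂ) ^ d) atTop (nhds (Q.coeff d)) := by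
  have hinv : Tendsto (fun x : ℝ => (x : ℂ)⁻¹) atTop (nhds 0) := by
    simpa [Function.comp_def] using
      (Complex.continuous_ofReal.tendsto 0).comp tendsto_inv_atTop_zero
  have hlim := ((reflect d Q).continuous.tendsto 0).comp hinv
  rw [← coeff_zero_eq_eval_zero, coeff_reflect, revAt_le (Nat.zero_le d), Nat.sub_zero] at hlim
  refine hlim.congr' ?_
  filter_upwards [eventually_ne_atTop 0] with x hx
  let := invertibleOfNonzero (Complex.ofReal_ne_zero.mpr hx)
  rw [Function.comp_apply, eq_div_iff (pow_ne_zero _ (Complex.ofReal_ne_zero.mpr hx)),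
    ← invOf_eq_inv]
  simpa using eval₂_reflect_mul_pow (RingHom.id ℂ) (x : ℂ) d Q hd

theorem Fin.sum_val_real (n : ℕ) : ∑ i : Fin (n + 1), (i : ℝ) = n * (n + 1) / 2 := by
  induction n with
  | zero => simp
  | succ n ih =>
    rw [Fin.sum_univ_castSucc]
    simp only [Fin.val_castSucc, ih, Fin.val_last]
    push_cast
    ring

theorem Matrix.det_of_descPochhammer_eval_mul {R : Type*} [CommRing R] [IsDomain R] {m : ℕ}
    (v c : Fin m → R) :
    (Matrix.of fun i j : Fin m => (descPochhammer R i).eval (v j) * c j).det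
      = (∏ i : Fin m, ∏ j ∈ Finset.Ioi i, (v j - v i)) * ∏ j, c j := by
  have hrow := Matrix.det_mul_row c (.of fun i j : Fin m => (descPochhammer R i).eval (v j))
  simp only [Matrix.of_apply] at hrow
  simp_rw [mul_comm _ (c _)]
  rw [hrow, ← Matrix.det_transpose, ← Matrix.det_vandermonde,
    Matrix.det_eval_matrixOfPolynomials_eq_det_vandermonde v (fun i => descPochhammer R i)
      (fun i => descPochhammer_natDegree R i) (fun i => monic_descPochhammer R i), mul_comm]
  rfl

theorem det_iteratedDerivWithin_rpow_mul_eval {n : ℕ} (β : Fin (n + 1) → ℝ)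
    (φ : Fin (n + 1) → ℂ[X]) (d : Fin (n + 1) → ℕ) {x : ℝ} (hx : 0 < x) :
    (Matrix.of fun i j : Fin (n + 1) => iteratedDerivWithin i
        (fun t : ℝ => ((t ^ β j : ℝ) : ℂ) * (φ j).eval (t : ℂ)) (Ioi 0) x).det
      = ((x ^ (∑ j, (β j + d j) - (n * (n + 1) : ℝ) / 2) : ℝ) : ℂ) *
        (Matrix.of fun i j : Fin (n + 1) =>
          (rpowDerivPoly (β j) (φ j) i).eval (x : ℂ) / (x : ℂ) ^ d j).det := by
  set B : Matrix (Fin (n + 1)) (Fin (n + 1)) ℂ :=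
    .of fun i j => (rpowDerivPoly (β j) (φ j) i).eval (x : ℂ) / (x : ℂ) ^ d j
  have hscale : (Matrix.of fun i j : Fin (n + 1) => iteratedDerivWithin i
        (fun t : ℝ => ((t ^ β j : ℝ) : ℂ) * (φ j).eval (t : ℂ)) (Ioi 0) x)
      = .of fun i j => ((x ^ (-(i : ℝ)) : ℝ) : ℂ) *
          Matrix.of (fun i j => ((x ^ (β j + d j) : ℝ) : ℂ) * B i j) i j := by
    ext i j
    have hx_pow : x ^ (β j - i) * x ^ d j = x ^ (-(i : ℝ)) * x ^ (β j + d j) := by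
      rw [← Real.rpow_natCast, ← Real.rpow_add hx, ← Real.rpow_add hx]
      congr 1
      ring
    have hx_pow' := congrArg (fun r : ℝ => (r : ℂ)) hx_pow
    have hxd : (x : ℂ) ^ d j ≠ 0 := pow_ne_zero _ (Complex.ofReal_ne_zero.mpr hx.ne')
    push_cast at hx_pow'
    simp only [B, Matrix.of_apply, iteratedDerivWithin_rpow_mul_eval _ _ _ hx]
    field_simp
    linear_combination (rpowDerivPoly (β j) (φ j) i).eval (x : ℂ) * hx_pow'
  rw [hscale, Matrix.det_mul_column, Matrix.det_mul_row, ← mul_assoc, ← Complex.ofReal_prod,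
    ← Complex.ofReal_prod, ← Complex.ofReal_mul, ← Real.rpow_sum_of_pos hx,
    ← Real.rpow_sum_of_pos hx, ← Real.rpow_add hx, Finset.sum_neg_distrib, Fin.sum_val_real]
  congr 3
  ring

theorem wronskian_rpow_mul_poly_asymptotic_general (n : ℕ) (β : Fin (n + 1) → ℝ)
    (φ : Fin (n + 1) → Polynomial ℂ)
    (μ : Fin (n + 1) → ℝ) (hμ : ∀ j, μ j = β j + ((φ j).natDegree : ℝ))
    (W : ℝ → ℂ)
    (hW : ∀ x : ℝ, W x = Matrix.det (Matrix.of fun i j : Fin (n + 1) =>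
        iteratedDerivWithin (i : ℕ)
          (fun t : ℝ => ((t ^ β j : ℝ) : ℂ) * (φ j).eval (t : ℂ)) (Set.Ioi (0 : ℝ)) x)) :
    Filter.Tendsto
      (fun x : ℝ => W x / ((x ^ ((∑ j, μ j) - (n * (n + 1) : ℝ) / 2) : ℝ) : ℂ))
      Filter.atTop
      (nhds ((∏ i : Fin (n + 1), ∏ j ∈ Finset.Ioi i, ((μ j - μ i : ℝ) : ℂ)) *
        ∏ j, (φ j).leadingCoeff)) := by
  obtain rfl : μ = fun j => β j + (φ j).natDegree := funext hμ
  have hlim : Tendsto (fun x : ℝ => (Matrix.of fun i j : Fin (n + 1) =>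
        (rpowDerivPoly (β j) (φ j) i).eval (x : ℂ) / (x : ℂ) ^ (φ j).natDegree).det) atTop
      (nhds (Matrix.of fun i j : Fin (n + 1) =>
        (descPochhammer ℂ i).eval ((β j + (φ j).natDegree : ℝ) : ℂ) * (φ j).leadingCoeff).det) :=
    (continuous_id.matrix_det.tendsto _).comp <| tendsto_pi_nhds.2 fun i =>
      tendsto_pi_nhds.2 fun j => by
        simpa only [Matrix.of_apply, coeff_rpowDerivPoly, coeff_natDegree] using
          tendsto_eval_div_pow_atTop (natDegree_rpowDerivPoly_le (β j) (φ j) i)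
  rw [Matrix.det_of_descPochhammer_eval_mul] at hlim
  simp only [← Complex.ofReal_sub] at hlim
  refine hlim.congr' ?_
  filter_upwards [eventually_gt_atTop 0] with x hx
  rw [hW, det_iteratedDerivWithin_rpow_mul_eval β φ _ hx,
    mul_div_cancel_left₀ _ (Complex.ofReal_ne_zero.mpr (Real.rpow_pos_of_pos hx _).ne')]

/-- Asymptotics of the Wronskian of `t ↦ t^{β_j} φ_j(t)` at infinity: with
`μ_j = β_j + deg φ_j` pairwise distinct, `W(x)/x^{Σ μ_j − n(n+1)/2}` tends to
`(∏_{i<j} (μ_j − μ_i)) · ∏_j lc(φ_j)` as `x → ∞`. -/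
theorem wronskian_rpow_mul_poly_asymptotic (n : ℕ) (β : Fin (n + 1) → ℝ)
    (φ : Fin (n + 1) → Polynomial ℂ) (hφ : ∀ j, φ j ≠ 0)
    (μ : Fin (n + 1) → ℝ) (hμ : ∀ j, μ j = β j + ((φ j).natDegree : ℝ))
    (hinj : Function.Injective μ)
    (W : ℝ → ℂ)
    (hW : ∀ x : ℝ, W x = Matrix.det (Matrix.of fun i j : Fin (n + 1) =>
        iteratedDerivWithin (i : ℕ)
          (fun t : ℝ => ((t ^ β j : ℝ) : ℂ) * (φ j).eval (t : ℂ)) (Set.Ioi (0 : ℝ)) x)) :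
    Filter.Tendsto
      (fun x : ℝ => W x / ((x ^ ((∑ j, μ j) - (n * (n + 1) : ℝ) / 2) : ℝ) : ℂ))
      Filter.atTop
      (nhds ((∏ i : Fin (n + 1), ∏ j ∈ Finset.Ioi i, ((μ j - μ i : ℝ) : ℂ)) *
        ∏ j, (φ j).leadingCoeff)) :=
  wronskian_rpow_mul_poly_asymptotic_general n β φ μ hμ W hW
end
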